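/- Let n ≥ 1 be an integer and set q = (3/2)^{1/n}. Then for every real t with 0 < t < (q − 1)/2, one has ( q t + (1 − t)(1 − t²)^{1/n} )ⁿ ≥ 1 + (q − 1) t / 2. -/

import Mathlib

/-!
Write `q = (3/2)^{1/n}` and `s = (1 - t²)^{1/n}`, so that `sⁿ = 1 - t²` and `s ≤ 1`. The base
`qt + (1 - t)s` exceeds `s` by `t(q - s) ≥ t(q - 1)`, so by Bernoulli's inequality its `n`-th
power is at least `sⁿ + n sⁿ⁻¹ t(q - 1) ≥ 1 - t² + t(q - 1)`, the last step because `n sⁿ⁻¹ ≥ 1`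
as soon as `sⁿ ≥ 1/2`. Finally `t² ≤ t(q - 1)/2` is exactly the hypothesis `t ≤ (q - 1)/2`.
-/

lemma one_le_mul_pow_pred {n : ℕ} (hn : n ≠ 0) {s : ℝ} (hs : 0 ≤ s) (hs1 : s ≤ 1)
    (hsn : 1 / 2 ≤ s ^ n) : 1 ≤ n * s ^ (n - 1) := by
  obtain ⟨m, rfl⟩ := Nat.exists_eq_add_one_of_ne_zero hn
  rcases Nat.eq_zero_or_pos m with rfl | hm
  · simp
  have hm2 : (2 : ℝ) ≤ (m + 1 : ℕ) := by exact_mod_cast Nat.succ_le_succ hm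
  have hpow : s ^ (m + 1) ≤ s ^ m := pow_le_pow_of_le_one hs hs1 m.le_succ
  rw [Nat.add_sub_cancel]
  nlinarith

lemma one_add_sub_one_mul_half_le_pow {n : ℕ} (hn : n ≠ 0) {q s t : ℝ} (hs : 0 ≤ s)
    (hsn : s ^ n = 1 - t ^ 2) (ht : 0 ≤ t) (htq : t ≤ (q - 1) / 2) (ht2 : t ^ 2 ≤ 1 / 2) :
    1 + (q - 1) * t / 2 ≤ (q * t + (1 - t) * s) ^ n := by
  have hs1 : s ≤ 1 := (pow_le_one_iff_of_nonneg hs hn).mp (by rw [hsn]; nlinarith)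
  have hd : 0 ≤ t * (q - 1) := by nlinarith
  have hbase : s + t * (q - 1) ≤ q * t + (1 - t) * s := by nlinarith
  calc 1 + (q - 1) * t / 2 ≤ s ^ n + t * (q - 1) := by rw [hsn]; nlinarith
    _ ≤ s ^ n + n * s ^ (n - 1) * (t * (q - 1)) := by
      have hsn2 : 1 / 2 ≤ s ^ n := by rw [hsn]; linarith
      exact add_le_add_right (le_mul_of_one_le_left hd (one_le_mul_pow_pred hn hs hs1 hsn2)) _
    _ ≤ (s + t * (q - 1)) ^ n := pow_add_mul_le_add_pow hs (by linarith) n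
    _ ≤ (q * t + (1 - t) * s) ^ n := pow_le_pow_left₀ (by linarith) hbase n

theorem kolodziej_stability_inequality (n : ℕ) (hn : 1 ≤ n) (t : ℝ)
    (ht : 0 < t) (ht' : t < (((3 / 2 : ℝ) ^ ((n : ℝ)⁻¹)) - 1) / 2) :
    1 + (((3 / 2 : ℝ) ^ ((n : ℝ)⁻¹)) - 1) * t / 2 ≤
      (((3 / 2 : ℝ) ^ ((n : ℝ)⁻¹)) * t + (1 - t) * (1 - t ^ 2) ^ ((n : ℝ)⁻¹)) ^ n := by
  have hn0 : n ≠ 0 := Nat.one_le_iff_ne_zero.mp hn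
  set q := (3 / 2 : ℝ) ^ ((n : ℝ)⁻¹)
  have hqn : q ^ n = 3 / 2 := Real.rpow_inv_natCast_pow (by norm_num) hn0
  have hq : q ≤ 3 / 2 := hqn ▸ le_self_pow₀ (by linarith) hn0
  have ht2 : t ^ 2 ≤ 1 / 2 := by nlinarith
  have h1t2 : 0 ≤ 1 - t ^ 2 := by linarith
  exact one_add_sub_one_mul_half_le_pow hn0 (Real.rpow_nonneg h1t2 _)
    (Real.rpow_inv_natCast_pow h1t2 hn0) ht.le ht'.le ht2
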